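/- With the setup of the previous statement (U_t = X_t - ∫_0^t γ(S_u) dS_u, S the running supremum of X, S^U the running supremum of U), for every t ≥ 0 one has U_t = S^U_t if and only if X_t = S_t. That is, the set {t ≥ 0 : U_t = S^U_t} coincides with {t ≥ 0 : X_t = S_t}. -/

import Mathlib

/-!
Write `I t = ∫_{(0,t]} γ(S) dS`. Since `0 ≤ γ ≤ 1`, `I` is nondecreasing and its increments
are dominated by those of `S`, so for `s ≤ t` we get `U s ≤ S s - I s ≤ S t - I t`, while
`X s = U s + I s ≤ S^U t + I t`. Hence `S^U = S - I`, and `U t - S^U t = X t - S t`.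
-/

open MeasureTheory Set Filter

namespace StieltjesFunction

variable (F : StieltjesFunction ℝ) {f : ℝ → ℝ} {a s t : ℝ}

lemma integrableOn_Ioc_of_mem_Icc (hf : Measurable f)
    (hf01 : ∀ u ∈ Ioc s t, f u ∈ Icc (0 : ℝ) 1) : IntegrableOn f (Ioc s t) F.measure :=
  Measure.integrableOn_of_bounded (M := 1) measure_Ioc_lt_top.ne hf.aestronglyMeasurable <|
    (ae_restrict_iff' measurableSet_Ioc).mpr <| ae_of_all _ fun u hu => by
      rw [Real.norm_eq_abs, abs_le]
      exact ⟨by linarith [(hf01 u hu).1], (hf01 u hu).2⟩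

lemma setIntegral_Ioc_mem_Icc (hst : s ≤ t) (hf : Measurable f)
    (hf01 : ∀ u ∈ Ioc s t, f u ∈ Icc (0 : ℝ) 1) :
    ∫ u in Ioc s t, f u ∂F.measure ∈ Icc 0 (F t - F s) := by
  refine ⟨setIntegral_nonneg measurableSet_Ioc fun u hu => (hf01 u hu).1, ?_⟩
  calc ∫ u in Ioc s t, f u ∂F.measure
      ≤ ∫ _ in Ioc s t, (1 : ℝ) ∂F.measure :=
        setIntegral_mono_on (F.integrableOn_Ioc_of_mem_Icc hf hf01)
          (integrableOn_const measure_Ioc_lt_top.ne) measurableSet_Ioc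
          fun u hu => (hf01 u hu).2
    _ = F t - F s := by
      rw [setIntegral_const, measureReal_def, measure_Ioc,
        ENNReal.toReal_ofReal (sub_nonneg.mpr (F.mono hst)), smul_eq_mul, mul_one]

lemma sub_setIntegral_Ioc_mem_Icc (has : a ≤ s) (hst : s ≤ t) (hf : Measurable f)
    (hf01 : ∀ u ∈ Ioc a t, f u ∈ Icc (0 : ℝ) 1) :
    ∫ u in Ioc a t, f u ∂F.measure - ∫ u in Ioc a s, f u ∂F.measure ∈ Icc 0 (F t - F s) := by
  have hsplit := setIntegral_union (Ioc_disjoint_Ioc_of_le le_rfl) measurableSet_Ioc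
    (F.integrableOn_Ioc_of_mem_Icc hf fun u hu => hf01 u (Ioc_subset_Ioc_right hst hu))
    (F.integrableOn_Ioc_of_mem_Icc hf fun u hu => hf01 u (Ioc_subset_Ioc_left has hu))
  rw [Ioc_union_Ioc_eq_Ioc has hst] at hsplit
  rw [hsplit, add_sub_cancel_left]
  exact F.setIntegral_Ioc_mem_Icc hst hf fun u hu => hf01 u (Ioc_subset_Ioc_left has hu)

end StieltjesFunction

section RunningSup

variable {X S I : ℝ → ℝ} {t : ℝ}

lemma ciSup_Icc_sub_eq_of_bddAbove (ht : 0 ≤ t)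
    (hbdd : BddAbove (range fun s : Icc (0 : ℝ) t => X s))
    (hS : ∀ s ∈ Icc (0 : ℝ) t, S s = ⨆ u : Icc (0 : ℝ) s, X u)
    (hI : ∀ s ∈ Icc (0 : ℝ) t, I t - I s ∈ Icc 0 (S t - S s)) :
    ⨆ s : Icc (0 : ℝ) t, (X s - I s) = S t - I t := by
  have hXS : ∀ s ∈ Icc (0 : ℝ) t, X s ≤ S s := fun s hs => by
    rw [hS s hs]
    have hbdd_s : BddAbove (range fun u : Icc (0 : ℝ) s => X u) :=
      hbdd.mono <| range_subset_iff.mpr fun u =>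
        mem_range_self (⟨u, u.2.1, u.2.2.trans hs.2⟩ : Icc (0 : ℝ) t)
    exact le_ciSup hbdd_s (⟨s, hs.1, le_rfl⟩ : Icc (0 : ℝ) s)
  have hsub_le : ∀ s : Icc (0 : ℝ) t, X s - I s ≤ S t - I t := fun s => by
    linarith [hXS s s.2, (hI s s.2).2]
  have : Nonempty (Icc (0 : ℝ) t) := ⟨⟨0, le_rfl, ht⟩⟩
  refine le_antisymm (ciSup_le hsub_le) ?_
  suffices S t ≤ (⨆ s : Icc (0 : ℝ) t, (X s - I s)) + I t by linarith
  rw [hS t ⟨ht, le_rfl⟩]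
  refine ciSup_le fun s => ?_
  have hU_le_SU := le_ciSup ⟨_, forall_mem_range.mpr hsub_le⟩ s
  linarith [(hI s s.2).1]

lemma ciSup_Icc_sub_eq (ht : 0 ≤ t) (hS0 : 0 ≤ S 0) (hSmono : Monotone S)
    (hS : ∀ s ∈ Icc (0 : ℝ) t, S s = ⨆ u : Icc (0 : ℝ) s, X u)
    (hI0 : I 0 = 0) (hI : ∀ s ∈ Icc (0 : ℝ) t, I t - I s ∈ Icc 0 (S t - S s)) :
    ⨆ s : Icc (0 : ℝ) t, (X s - I s) = S t - I t := by
  by_cases hbdd : BddAbove (range fun s : Icc (0 : ℝ) t => X s)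
  · exact ciSup_Icc_sub_eq_of_bddAbove ht hbdd hS hI
  -- In `ℝ` the supremum of an unbounded family is `0`, so `S` is flat on `[0, t]` and `I = 0`
  -- there.
  have hSt : S t = 0 := by
    rw [hS t ⟨ht, le_rfl⟩, Real.iSup_of_not_bddAbove hbdd]
  have hIs : ∀ s ∈ Icc (0 : ℝ) t, I s = 0 := fun s hs => by
    have h0 := hI 0 ⟨le_rfl, ht⟩
    linarith [h0.1, h0.2, (hI s hs).1, (hI s hs).2, hSmono hs.1]
  calc ⨆ s : Icc (0 : ℝ) t, (X s - I s) = ⨆ s : Icc (0 : ℝ) t, X s :=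
        iSup_congr fun s => by rw [hIs s s.2, sub_zero]
    _ = S t - I t := by rw [Real.iSup_of_not_bddAbove hbdd, hSt, hIs t ⟨ht, le_rfl⟩, sub_zero]

end RunningSup

theorem taxed_process_at_max_iff_general
    (X : ℝ → ℝ) (x : ℝ) (hx : 0 ≤ x) (hX0 : X 0 = x)
    (S : StieltjesFunction ℝ)
    (hS : ∀ t, 0 ≤ t → S t = ⨆ s : Set.Icc (0:ℝ) t, X s)
    (γ : ℝ → ℝ) (hmeas : Measurable γ)
    (hγ0 : ∀ y, 0 ≤ y → 0 ≤ γ y) (hγ1 : ∀ y, 0 ≤ y → γ y < 1)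
    (U SU : ℝ → ℝ)
    (hU : ∀ t, U t = X t - ∫ u in Set.Ioc (0:ℝ) t, γ (S u) ∂S.measure)
    (hSU : ∀ t, SU t = ⨆ s : Set.Icc (0:ℝ) t, U s) :
    ∀ t, 0 ≤ t → (U t = SU t ↔ X t = S t) := by
  intro t ht
  have hS0 : S 0 = x := (hS 0 le_rfl).trans <| ciSup_unique.trans hX0
  have hγS : ∀ u ∈ Ioc (0 : ℝ) t, γ (S u) ∈ Icc (0 : ℝ) 1 := fun u hu =>
    have hSu : 0 ≤ S u := (hx.trans_eq hS0.symm).trans (S.mono hu.1.le)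
    ⟨hγ0 _ hSu, (hγ1 _ hSu).le⟩
  have hSUt : SU t = S t - ∫ u in Ioc 0 t, γ (S u) ∂S.measure := by
    simp only [hSU, hU]
    exact ciSup_Icc_sub_eq (I := fun s => ∫ u in Ioc 0 s, γ (S u) ∂S.measure) ht
      (hx.trans_eq hS0.symm) S.mono (fun s hs => hS s hs.1) (by simp)
      fun s hs => S.sub_setIntegral_Ioc_mem_Icc hs.1 hs.2 (hmeas.comp S.mono.measurable) hγS
  rw [hU t, hSUt, sub_left_inj]

/-- With the setup of Statement 6, for every `t ≥ 0` one has
`U t = S^U_t` if and only if `X t = S t`. -/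
theorem taxed_process_at_max_iff
    (X : ℝ → ℝ) (x : ℝ) (hx : 0 ≤ x) (hX0 : X 0 = x)
    (hXright : ∀ t, ContinuousWithinAt X (Set.Ici t) t)
    (hXleft : ∀ t, 0 < t → ∃ l, Tendsto X (nhdsWithin t (Set.Iio t)) (nhds l))
    (S : StieltjesFunction ℝ)
    (hS : ∀ t, 0 ≤ t → S t = ⨆ s : Set.Icc (0:ℝ) t, X s)
    (γ : ℝ → ℝ) (hmeas : Measurable γ)
    (hγ0 : ∀ y, 0 ≤ y → 0 ≤ γ y) (hγ1 : ∀ y, 0 ≤ y → γ y < 1)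
    (U SU : ℝ → ℝ)
    (hU : ∀ t, U t = X t - ∫ u in Set.Ioc (0:ℝ) t, γ (S u) ∂S.measure)
    (hSU : ∀ t, SU t = ⨆ s : Set.Icc (0:ℝ) t, U s) :
    ∀ t, 0 ≤ t → (U t = SU t ↔ X t = S t) :=
  taxed_process_at_max_iff_general X x hx hX0 S hS γ hmeas hγ0 hγ1 U SU hU hSU
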